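/- arXiv:1905.02864 — 5 statements merged into one kernel-verified Lean document; each statement's English description precedes it below -/
import Mathlib

section
/- For every positive integer d there is a constant C = C(d) > 0 with the following property. Let N be a positive integer and let f(n) = \sum_{i=0}^d \beta_i n^i be a real polynomial of degree at most d, with binomial-basis coefficients \alpha_0, ..., \alpha_d (i.e. f(n) = \sum_{i=0}^d \alpha_i \binom{n}{i} for all integers n). Then there exists an integer D with 1 \le D \le C such that \|D\beta_i\|_{\mathbb{R}/\mathbb{Z}} \le C \cdot N^{-i} \cdot \|f\|_{C^\infty([N])} for every 0 \le i \le d. -/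
open Finset

/-- Distance from a real number to the nearest integer, i.e. `‖x‖_{ℝ/ℤ}`. -/
noncomputable def distToInt (x : ℝ) : ℝ := |x - round x|

/-- The binomial polynomial `n ↦ n(n-1)⋯(n-i+1)/i!` evaluated at an integer `n`, as a real. -/
noncomputable def binomR (n : ℤ) (i : ℕ) : ℝ :=
  (∏ j ∈ Finset.range i, ((n : ℝ) - (j : ℝ))) / (Nat.factorial i : ℝ)

/-!
Comparing coefficients of the two expansions of `f` gives `β j = ∑_{i ≥ j} α i * s(i, j) / i!`,
where the signed Stirling numbers `s(i, j)` of the first kind are the (integer) coefficients of the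
falling factorial `n (n - 1) ⋯ (n - i + 1)`. Taking `D = d!` clears all denominators, so `D β j`
is an integer combination of `α j, …, α d` with coefficients depending only on `d`; and for
`i ≥ j` we have `‖α i‖_{ℝ/ℤ} ≤ N^{-i} ‖f‖ ≤ N^{-j} ‖f‖`.
-/

open Polynomial Nat

lemma distToInt_nonneg (x : ℝ) : 0 ≤ distToInt x := abs_nonneg _

lemma distToInt_eq_norm (x : ℝ) : distToInt x = ‖(x : UnitAddCircle)‖ := by
  rw [UnitAddCircle.norm_eq, distToInt]

lemma distToInt_sum_intCast_mul_le {ι : Type*} (s : Finset ι) (m : ι → ℤ) (x : ι → ℝ) :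
    distToInt (∑ i ∈ s, (m i : ℝ) * x i) ≤ ∑ i ∈ s, |(m i : ℝ)| * distToInt (x i) := by
  have hcoe : ((∑ i ∈ s, (m i : ℝ) * x i : ℝ) : UnitAddCircle)
      = ∑ i ∈ s, m i • ((x i : ℝ) : UnitAddCircle) := by
    simp only [← zsmul_eq_mul, ← QuotientAddGroup.mk'_apply, map_sum, map_zsmul]
  rw [distToInt_eq_norm, hcoe]
  refine (norm_sum_le _ _).trans (sum_le_sum fun i _ => (norm_zsmul_le _ _).trans_eq ?_)
  rw [distToInt_eq_norm, Int.norm_eq_abs]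

lemma binomR_eq_eval_descPochhammer (n : ℤ) (i : ℕ) :
    binomR n i = (descPochhammer ℝ i).eval (n : ℝ) / i ! := by
  rw [binomR, descPochhammer_eval_eq_prod_range]

lemma eq_sum_div_factorial_mul_coeff_descPochhammer {d : ℕ} {β α : ℕ → ℝ}
    (hf : ∀ n : ℤ, ∑ i ∈ range (d + 1), β i * (n : ℝ) ^ i
      = ∑ i ∈ range (d + 1), α i * binomR n i) {j : ℕ} (hj : j ≤ d) :
    β j = ∑ i ∈ range (d + 1), α i / i ! * (descPochhammer ℤ i).coeff j := by
  have hpoly : ∑ i ∈ range (d + 1), C (β i) * X ^ i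
      = ∑ i ∈ range (d + 1), C (α i / i !) * descPochhammer ℝ i := by
    apply eq_of_infinite_eval_eq
    refine (Set.infinite_range_of_injective Int.cast_injective).mono ?_
    rintro _ ⟨n, rfl⟩
    simpa [eval_finsetSum, binomR_eq_eval_descPochhammer, mul_div_assoc', div_mul_eq_mul_div]
      using hf n
  have hcoeff (i : ℕ) : (descPochhammer ℝ i).coeff j = (descPochhammer ℤ i).coeff j := by
    rw [← descPochhammer_map (Int.castRingHom ℝ), coeff_map, eq_intCast]
  simpa [finsetSum_coeff, coeff_C_mul, coeff_X_pow, Nat.lt_succ_iff, hj, hcoeff]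
    using congrArg (coeff · j) hpoly

/-- `d!` times the change of basis from binomial to monomial coefficients; the division is exact
for `i ≤ d`, the only range in which it is used. -/
noncomputable def binomialToMonomial (d i j : ℕ) : ℤ :=
  (d ! / i ! : ℕ) * (descPochhammer ℤ i).coeff j

lemma binomialToMonomial_eq_zero_of_lt {d i j : ℕ} (h : i < j) : binomialToMonomial d i j = 0 := by
  rw [binomialToMonomial, coeff_eq_zero_of_natDegree_lt (by rwa [descPochhammer_natDegree]),
    mul_zero]

lemma factorial_mul_eq_sum_binomialToMonomial {d : ℕ} {β α : ℕ → ℝ}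
    (hf : ∀ n : ℤ, ∑ i ∈ range (d + 1), β i * (n : ℝ) ^ i
      = ∑ i ∈ range (d + 1), α i * binomR n i) {j : ℕ} (hj : j ≤ d) :
    (d ! : ℝ) * β j = ∑ i ∈ range (d + 1), (binomialToMonomial d i j : ℝ) * α i := by
  rw [eq_sum_div_factorial_mul_coeff_descPochhammer hf hj, mul_sum]
  refine sum_congr rfl fun i hi => ?_
  have hfac : ((d ! / i ! : ℕ) : ℝ) = d ! / i ! :=
    Nat.cast_div (factorial_dvd_factorial (mem_range_succ_iff.mp hi)) (by positivity)
  rw [binomialToMonomial, Int.cast_mul, Int.cast_natCast, hfac]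
  field_simp

section

variable {d N : ℕ} (α : ℕ → ℝ)

lemma distToInt_le_inv_pow_mul_sup' (hN : 0 < N) {i j : ℕ} (hi : i ∈ range (d + 1))
    (hji : j ≤ i) :
    distToInt (α i) ≤ ((N : ℝ) ^ j)⁻¹ *
      (range (d + 1)).sup' nonempty_range_add_one (fun k => (N : ℝ) ^ k * distToInt (α k)) := by
  have hN1 : (1 : ℝ) ≤ N := by exact_mod_cast hN
  calc distToInt (α i) = ((N : ℝ) ^ i)⁻¹ * ((N : ℝ) ^ i * distToInt (α i)) := by field_simp
    _ ≤ _ := by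
      gcongr ?_ * ?_
      · exact mul_nonneg (by positivity) (distToInt_nonneg _)
      · exact inv_anti₀ (by positivity) (pow_le_pow_right₀ hN1 hji)
      · exact le_sup' (fun k => (N : ℝ) ^ k * distToInt (α k)) hi

lemma distToInt_sum_le_of_eq_zero_of_lt (hN : 0 < N) (m : ℕ → ℤ) {j : ℕ}
    (hm : ∀ i < j, m i = 0) :
    distToInt (∑ i ∈ range (d + 1), (m i : ℝ) * α i) ≤ (∑ i ∈ range (d + 1), |(m i : ℝ)|) *
      (((N : ℝ) ^ j)⁻¹ *
        (range (d + 1)).sup' nonempty_range_add_one (fun k => (N : ℝ) ^ k * distToInt (α k))) := by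
  refine (distToInt_sum_intCast_mul_le _ m α).trans ?_
  rw [sum_mul]
  refine sum_le_sum fun i hi => ?_
  by_cases hji : j ≤ i
  · exact mul_le_mul_of_nonneg_left (distToInt_le_inv_pow_mul_sup' α hN hi hji) (abs_nonneg _)
  · simp [hm i (not_le.mp hji)]

end

/-- For every positive integer `d` there is `C = C(d) > 0` such that: for every positive
integer `N` and every real polynomial `f(n) = ∑_{i=0}^d β i * n^i` with binomial-basis
coefficients `α i` (i.e. `f(n) = ∑_{i=0}^d α i * binom(n,i)` for all integers `n`), there is an
integer `D` with `1 ≤ D ≤ C` such that `‖D β i‖_{ℝ/ℤ} ≤ C * N^{-i} * ‖f‖_{C^∞([N])}` for all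
`0 ≤ i ≤ d`, where `‖f‖_{C^∞([N])} = max_{0 ≤ i ≤ d} N^i ‖α i‖_{ℝ/ℤ}`. -/
theorem stmt0 (d : ℕ) :
    ∃ C : ℝ, 0 < C ∧
      ∀ (N : ℕ), 0 < N → ∀ (β α : ℕ → ℝ),
        (∀ n : ℤ, ∑ i ∈ Finset.range (d + 1), β i * (n : ℝ) ^ i
            = ∑ i ∈ Finset.range (d + 1), α i * binomR n i) →
        ∃ D : ℕ, 1 ≤ D ∧ (D : ℝ) ≤ C ∧
          ∀ i ≤ d,
            distToInt ((D : ℝ) * β i)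
              ≤ C * ((N : ℝ) ^ i)⁻¹ *
                (Finset.range (d + 1)).sup'
                  (by simp) (fun i => (N : ℝ) ^ i * distToInt (α i)) := by
  set M := binomialToMonomial d
  set C : ℝ := d ! + ∑ k ∈ range (d + 1), ∑ i ∈ range (d + 1), |(M i k : ℝ)|
  have hM : 0 ≤ ∑ k ∈ range (d + 1), ∑ i ∈ range (d + 1), |(M i k : ℝ)| := by positivity
  refine ⟨C, by positivity, fun N hN β α hf =>
    ⟨d !, d.factorial_pos, le_add_of_nonneg_right hM, fun j hj => ?_⟩⟩
  have hj' : j ∈ range (d + 1) := mem_range_succ_iff.2 hj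
  have hcol : ∑ i ∈ range (d + 1), |(M i j : ℝ)| ≤ C :=
    (single_le_sum (f := fun k => ∑ i ∈ range (d + 1), |(M i k : ℝ)|)
      (fun _ _ => by positivity) hj').trans (le_add_of_nonneg_left (by positivity))
  have hS := (distToInt_nonneg _).trans (distToInt_le_inv_pow_mul_sup' α hN hj' le_rfl)
  rw [factorial_mul_eq_sum_binomialToMonomial hf hj, mul_assoc]
  exact (distToInt_sum_le_of_eq_zero_of_lt α hN (M · j)
    fun i hi => binomialToMonomial_eq_zero_of_lt hi).trans (mul_le_mul_of_nonneg_right hcol hS)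
end

section
/- There is an absolute constant C > 0 such that the following holds. Let W, H, N be positive integers with W \ge 10, H \ge W^{12} and N \ge H, and for 1 \le k \le W^2 let I_k = ((k−1) W^{−2} H, k W^{−2} H]. Let \beta : ℕ → ℂ be a 1-bounded multiplicative function, let \hat\beta be the completely multiplicative function with \hat\beta(p) = \beta(p) for all primes p, and let \eta := \beta * (\mu \cdot \hat\beta) be the Dirichlet convolution of \beta with the pointwise product of the Möbius function \mu and \hat\beta (so that \beta = \hat\beta * \eta). Then for every function c assigning to each quadruple (n, k, a, b) of positive integers a complex number with |c| \le 1, one has |\sum_{n \le N} \sum_{k \le W^2} \sum_{a > W} \eta(a) \sum_{b \in ℕ : ab \in n + I_k} c(n, k, a, b)| \le C \cdot W^{−1/4} \cdot H \cdot N. -/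
/-!
Since `β̂` agrees with `β` at primes, `η = β * (μ · β̂)` vanishes at every prime; being
multiplicative, it therefore vanishes at every `a` with a prime `p ∥ a`, i.e. it is supported on
powerful numbers. There `|η(a)| ≤ 2^ω(a) ≪ a^{1/16}`. For fixed `a` the intervals
`n + I_k` tile `(n, n + H]`, so the weights `c` are summed over at most `H (N + H) / a` triples
`(n, k, b)`. The sum is thus `≪ H N ∑_{a > W powerful} a^{-15/16}`, and writing `a = u²v³` bounds
this by `H N W^{-1/4} ∑_{u,v} u^{-11/8} v^{-33/16}`, a convergent double series.
-/

open Finset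

/-- `β` is a 1-bounded multiplicative function. -/
def OneBoundedMult (β : ℕ → ℂ) : Prop :=
  (∀ n, ‖β n‖ ≤ 1) ∧ β 1 = 1 ∧ ∀ m n : ℕ, Nat.Coprime m n → β (m * n) = β m * β n

/-- `f` is completely multiplicative. -/
def CompletelyMult (f : ℕ → ℂ) : Prop :=
  f 1 = 1 ∧ ∀ m n : ℕ, f (m * n) = f m * f n

/-- The Dirichlet convolution `η = β * (μ ⬝ β̂)` of `β` with the pointwise product of the
Möbius function and `β̂`. -/
noncomputable def etaConv (β hatβ : ℕ → ℂ) (a : ℕ) : ℂ :=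
  ∑ d ∈ a.divisors, β d * ((ArithmeticFunction.moebius (a / d) : ℤ) : ℂ) * hatβ (a / d)

namespace Nat

def Powerful (n : ℕ) : Prop := ∀ p ∈ n.primeFactors, p ^ 2 ∣ n

instance : DecidablePred Powerful := fun n =>
  inferInstanceAs (Decidable (∀ p ∈ n.primeFactors, p ^ 2 ∣ n))

theorem Powerful.exists_eq_sq_mul_cube {n : ℕ} (hn : n.Powerful) (h0 : n ≠ 0) :
    ∃ u v : ℕ, n = u ^ 2 * v ^ 3 := by
  obtain ⟨a, b, rfl, ha⟩ := sq_mul_squarefree n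
  have hb : b ≠ 0 := by rintro rfl; simp at h0
  -- a prime of the squarefree part `a` not dividing `b` would occur only once in `b ^ 2 * a`
  have hab : a ∣ b := by
    rw [← prod_primeFactors_of_squarefree ha, prod_primeFactors_dvd_iff hb]
    intro p hp
    have hp' := prime_of_mem_primeFactors hp
    refine mem_primeFactors.mpr ⟨hp', by_contra fun hpb => ?_, hb⟩
    have hcop : Coprime (p ^ 2) (b ^ 2) := Coprime.pow 2 2 ((hp'.coprime_iff_not_dvd).mpr hpb)
    have hpa : p ^ 2 ∣ a :=
      hcop.dvd_of_dvd_mul_left <| hn p <| mem_primeFactors.mpr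
        ⟨hp', dvd_mul_of_dvd_right (dvd_of_mem_primeFactors hp) _, h0⟩
    exact hp'.one_lt.ne' (Nat.isUnit_iff.mp (ha p (by rwa [← sq])))
  obtain ⟨c, rfl⟩ := hab
  exact ⟨c, a, by ring⟩

theorem sum_powerful_le_sum_sq_mul_cube {f : ℕ → ℝ} (hf : ∀ n, 0 ≤ f n) (M : ℕ) :
    ∑ a ∈ Icc 1 M with a.Powerful, f a ≤ ∑ u ∈ Icc 1 M, ∑ v ∈ Icc 1 M, f (u ^ 2 * v ^ 3) := by
  have hsub : {a ∈ Icc 1 M | a.Powerful} ⊆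
      (Icc 1 M ×ˢ Icc 1 M).image fun uv => uv.1 ^ 2 * uv.2 ^ 3 := by
    intro a ha
    obtain ⟨ha, hpow⟩ := mem_filter.mp ha
    obtain ⟨ha1, haM⟩ := mem_Icc.mp ha
    obtain ⟨u, v, rfl⟩ := hpow.exists_eq_sq_mul_cube (by omega)
    have hu : u ≠ 0 := by rintro rfl; simp at ha1
    have hv : v ≠ 0 := by rintro rfl; simp at ha1
    refine mem_image.mpr ⟨(u, v), mem_product.mpr ⟨?_, ?_⟩, rfl⟩ <;>
      refine mem_Icc.mpr ⟨by omega, le_trans ?_ haM⟩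
    · calc u ≤ u ^ 2 := le_self_pow two_ne_zero u
        _ ≤ u ^ 2 * v ^ 3 := Nat.le_mul_of_pos_right _ (by positivity)
    · calc v ≤ v ^ 3 := le_self_pow three_ne_zero v
        _ ≤ u ^ 2 * v ^ 3 := Nat.le_mul_of_pos_left _ (by positivity)
  calc ∑ a ∈ Icc 1 M with a.Powerful, f a
      ≤ ∑ a ∈ (Icc 1 M ×ˢ Icc 1 M).image fun uv => uv.1 ^ 2 * uv.2 ^ 3, f a :=
        sum_le_sum_of_subset_of_nonneg hsub fun a _ _ => hf a
    _ ≤ ∑ uv ∈ Icc 1 M ×ˢ Icc 1 M, f (uv.1 ^ 2 * uv.2 ^ 3) :=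
        sum_image_le_of_nonneg fun a _ => hf a
    _ = ∑ u ∈ Icc 1 M, ∑ v ∈ Icc 1 M, f (u ^ 2 * v ^ 3) := sum_product _ _ _

theorem sum_powerful_rpow_neg_le {s : ℝ} (hs : 1 / 2 < s) (M : ℕ) :
    ∑ a ∈ Icc 1 M with a.Powerful, (a : ℝ) ^ (-s) ≤
      (∑' u : ℕ, (u : ℝ) ^ (-(2 * s))) * ∑' v : ℕ, (v : ℝ) ^ (-(3 * s)) := by
  have hnonneg (t : ℝ) (n : ℕ) : 0 ≤ (n : ℝ) ^ t := Real.rpow_nonneg n.cast_nonneg t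
  have hsum {t : ℝ} (ht : 1 < t) : Summable fun n : ℕ => (n : ℝ) ^ (-t) :=
    Real.summable_nat_rpow.mpr (by linarith)
  calc ∑ a ∈ Icc 1 M with a.Powerful, (a : ℝ) ^ (-s)
      ≤ ∑ u ∈ Icc 1 M, ∑ v ∈ Icc 1 M, ((u ^ 2 * v ^ 3 : ℕ) : ℝ) ^ (-s) :=
        sum_powerful_le_sum_sq_mul_cube (hnonneg _) M
    _ = (∑ u ∈ Icc 1 M, (u : ℝ) ^ (-(2 * s))) * ∑ v ∈ Icc 1 M, (v : ℝ) ^ (-(3 * s)) := by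
        rw [sum_mul_sum]
        refine sum_congr rfl fun u _ => sum_congr rfl fun v _ => ?_
        push_cast
        rw [Real.mul_rpow (by positivity) (by positivity), ← Real.rpow_natCast_mul u.cast_nonneg,
          ← Real.rpow_natCast_mul v.cast_nonneg]
        ring_nf
    _ ≤ _ := by
        gcongr <;> exact (hsum (by linarith)).sum_le_tsum _ fun n _ => hnonneg _ n

theorem pow_card_primeFactors_le (c : ℕ) {a : ℕ} (ha : a ≠ 0) :
    c ^ #a.primeFactors ≤ c ^ c * a := by
  -- the primes `p ≥ c` of `a` are paid for by `a` itself, the fewer than `c` others by `c ^ c`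
  rw [← prod_const, ← prod_filter_mul_prod_filter_not a.primeFactors (· < c)]
  gcongr
  · rw [prod_const]
    rcases c.eq_zero_or_pos with rfl | hc
    · simp
    gcongr
    exact (card_le_card fun p hp => mem_range.mpr (mem_filter.mp hp).2).trans (card_range c).le
  · calc ∏ p ∈ a.primeFactors with ¬p < c, c
        ≤ ∏ p ∈ a.primeFactors with ¬p < c, p :=
          prod_le_prod' fun p hp => not_lt.mp (mem_filter.mp hp).2
      _ ≤ a := le_of_dvd (pos_of_ne_zero ha)
          ((prod_dvd_prod_of_subset _ _ _ (filter_subset _ _)).trans (prod_primeFactors_dvd a))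

theorem card_divisors_filter_squarefree_le (a : ℕ) :
    #{d ∈ a.divisors | Squarefree d} ≤ 2 ^ #a.primeFactors := by
  rw [← card_powerset]
  refine card_le_card_of_injOn primeFactors (fun d hd => ?_) fun d hd e he hde => ?_
  · obtain ⟨hda, ha⟩ := mem_divisors.mp (mem_filter.mp hd).1
    exact mem_powerset.mpr (primeFactors_mono hda ha)
  · rw [← prod_primeFactors_of_squarefree (mem_filter.mp hd).2,
      ← prod_primeFactors_of_squarefree (mem_filter.mp he).2, hde]

end Nat

theorem two_pow_card_primeFactors_le_rpow {a : ℕ} (ha : a ≠ 0) {k : ℕ} (hk : k ≠ 0) :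
    (2 : ℝ) ^ #a.primeFactors ≤ 2 ^ 2 ^ k * (a : ℝ) ^ (k⁻¹ : ℝ) := by
  have key : ((2 : ℝ) ^ #a.primeFactors) ^ k ≤ (2 ^ 2 ^ k) ^ k * a := by
    have h : ((2 ^ k) ^ #a.primeFactors : ℝ) ≤ (2 ^ k) ^ 2 ^ k * a := by
      exact_mod_cast Nat.pow_card_primeFactors_le (2 ^ k) ha
    calc ((2 : ℝ) ^ #a.primeFactors) ^ k = (2 ^ k) ^ #a.primeFactors := by
          rw [← pow_mul, ← pow_mul, mul_comm]
      _ ≤ (2 ^ k) ^ 2 ^ k * a := h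
      _ = (2 ^ 2 ^ k) ^ k * a := by rw [← pow_mul, ← pow_mul, Nat.mul_comm k]
  calc (2 : ℝ) ^ #a.primeFactors
      = (((2 : ℝ) ^ #a.primeFactors) ^ k) ^ (k⁻¹ : ℝ) :=
        (Real.pow_rpow_inv_natCast (by positivity) hk).symm
    _ ≤ ((2 ^ 2 ^ k) ^ k * a) ^ (k⁻¹ : ℝ) := by gcongr
    _ = 2 ^ 2 ^ k * (a : ℝ) ^ (k⁻¹ : ℝ) := by
      rw [Real.mul_rpow (by positivity) (by positivity),
        Real.pow_rpow_inv_natCast (by positivity) hk]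

theorem CompletelyMult.norm_le_one {f : ℕ → ℂ} (hf : CompletelyMult f)
    (hp : ∀ p : ℕ, p.Prime → ‖f p‖ ≤ 1) {n : ℕ} (hn : n ≠ 0) : ‖f n‖ ≤ 1 := by
  induction n using Nat.recOnMul with
  | zero => exact absurd rfl hn
  | one => simp [hf.1]
  | prime p hp' => exact hp p hp'
  | mul a b iha ihb =>
    rw [hf.2, norm_mul]
    exact mul_le_one₀ (iha (left_ne_zero_of_mul hn)) (norm_nonneg _)
      (ihb (right_ne_zero_of_mul hn))

theorem isMultiplicative_toArithmeticFunction {R : Type*} [MonoidWithZero R] {f : ℕ → R}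
    (h1 : f 1 = 1) (hmul : ∀ m n : ℕ, m.Coprime n → f (m * n) = f m * f n) :
    (toArithmeticFunction f).IsMultiplicative :=
  ArithmeticFunction.IsMultiplicative.iff_ne_zero.mpr ⟨by simp [toArithmeticFunction, h1],
    fun hm hn hmn => by simp [toArithmeticFunction, hm, hn, hmul _ _ hmn]⟩

section Eta

open ArithmeticFunction
open scoped ArithmeticFunction.Moebius

variable {β hatβ : ℕ → ℂ}

theorem etaConv_eq_mul_apply (a : ℕ) :
    etaConv β hatβ a = (toArithmeticFunction β *
      pmul ((μ : ArithmeticFunction ℤ) : ArithmeticFunction ℂ) (toArithmeticFunction hatβ)) a := by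
  rw [mul_apply, Nat.sum_divisorsAntidiagonal fun i j => toArithmeticFunction β i *
    pmul ((μ : ArithmeticFunction ℤ) : ArithmeticFunction ℂ) (toArithmeticFunction hatβ) j, etaConv]
  refine sum_congr rfl fun d hd => ?_
  obtain ⟨hda, ha⟩ := Nat.mem_divisors.mp hd
  have hF {f : ℕ → ℂ} {n : ℕ} (hn : n ≠ 0) : toArithmeticFunction f n = f n := if_neg hn
  rw [pmul_apply, intCoe_apply, hF (ne_zero_of_dvd_ne_zero ha hda),
    hF (ne_zero_of_dvd_ne_zero ha (Nat.div_dvd_of_dvd hda))]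
  ring

theorem etaConv_mul_of_coprime (hβ : OneBoundedMult β) (hhat : CompletelyMult hatβ) {m n : ℕ}
    (hmn : m.Coprime n) : etaConv β hatβ (m * n) = etaConv β hatβ m * etaConv β hatβ n := by
  simp only [etaConv_eq_mul_apply]
  refine IsMultiplicative.map_mul_of_coprime ?_ hmn
  exact (isMultiplicative_toArithmeticFunction hβ.2.1 hβ.2.2).mul <|
    isMultiplicative_moebius.intCast.pmul <|
      isMultiplicative_toArithmeticFunction hhat.1 fun m n _ => hhat.2 m n

theorem etaConv_eq_zero_of_prime (h1 : β 1 = 1) (hat1 : hatβ 1 = 1) {p : ℕ} (hp : p.Prime)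
    (hagree : hatβ p = β p) : etaConv β hatβ p = 0 := by
  rw [etaConv, hp.divisors, sum_insert (by simp [hp.one_lt.ne]), sum_singleton,
    Nat.div_self hp.pos, Nat.div_one, moebius_apply_prime hp, moebius_apply_one, h1, hat1, hagree]
  push_cast
  ring

theorem etaConv_eq_zero_of_not_powerful (hβ : OneBoundedMult β) (hhat : CompletelyMult hatβ)
    (hagree : ∀ p : ℕ, p.Prime → hatβ p = β p) {a : ℕ} (ha : ¬a.Powerful) :
    etaConv β hatβ a = 0 := by
  obtain ⟨p, hpa', hp2⟩ : ∃ p ∈ a.primeFactors, ¬p ^ 2 ∣ a := by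
    simpa only [Nat.Powerful, not_forall, exists_prop] using ha
  obtain ⟨hp, hpa, -⟩ := Nat.mem_primeFactors.mp hpa'
  have hcop : p.Coprime (a / p) := (hp.coprime_iff_not_dvd).mpr fun h =>
    hp2 (sq p ▸ Nat.mul_dvd_of_dvd_div hpa h)
  rw [← Nat.mul_div_cancel' hpa, etaConv_mul_of_coprime hβ hhat hcop,
    etaConv_eq_zero_of_prime hβ.2.1 hhat.1 hp (hagree p hp), zero_mul]

theorem norm_etaConv_le (hβ : ∀ n, ‖β n‖ ≤ 1) (hhat : ∀ n : ℕ, n ≠ 0 → ‖hatβ n‖ ≤ 1) (a : ℕ) :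
    ‖etaConv β hatβ a‖ ≤ 2 ^ #a.primeFactors := by
  calc ‖etaConv β hatβ a‖
      ≤ ∑ d ∈ a.divisors, if Squarefree (a / d) then (1 : ℝ) else 0 := by
        refine (norm_sum_le _ _).trans (sum_le_sum fun d hd => ?_)
        obtain ⟨hda, ha⟩ := Nat.mem_divisors.mp hd
        have hμ : |((μ (a / d) : ℤ) : ℝ)| = if Squarefree (a / d) then 1 else 0 := by
          exact_mod_cast abs_moebius
        rw [norm_mul, norm_mul, Complex.norm_intCast, hμ]
        split_ifs
        · simpa using mul_le_one₀ (hβ d) (norm_nonneg _)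
            (hhat _ (ne_zero_of_dvd_ne_zero ha (Nat.div_dvd_of_dvd hda)))
        · simp
    _ = #{d ∈ a.divisors | Squarefree d} := by
        rw [Nat.sum_div_divisors a fun m => if Squarefree m then (1 : ℝ) else 0, sum_boole]
    _ ≤ 2 ^ #a.primeFactors := by exact_mod_cast Nat.card_divisors_filter_squarefree_le a

theorem norm_etaConv_div_le (hβ : ∀ n, ‖β n‖ ≤ 1)
    (hhat : ∀ n : ℕ, n ≠ 0 → ‖hatβ n‖ ≤ 1) {W : ℝ} (hW : 0 < W) {a : ℕ} (hWa : W ≤ a) :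
    ‖etaConv β hatβ a‖ / a ≤ 2 ^ 2 ^ 16 * W ^ (-(1 : ℝ) / 4) * (a : ℝ) ^ (-(11 / 16 : ℝ)) := by
  have ha : (0 : ℝ) < a := hW.trans_le hWa
  calc ‖etaConv β hatβ a‖ / a ≤ 2 ^ 2 ^ 16 * (a : ℝ) ^ (((16 : ℕ) : ℝ)⁻¹) / a := by
        gcongr
        exact (norm_etaConv_le hβ hhat a).trans
          (two_pow_card_primeFactors_le_rpow (by exact_mod_cast ha.ne') (by norm_num))
    _ = 2 ^ 2 ^ 16 * ((a : ℝ) ^ (-(1 : ℝ) / 4) * (a : ℝ) ^ (-(11 / 16 : ℝ))) := by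
        rw [← Real.rpow_add ha, mul_div_assoc, ← Real.rpow_sub_one ha.ne']
        norm_num
    _ ≤ 2 ^ 2 ^ 16 * W ^ (-(1 : ℝ) / 4) * (a : ℝ) ^ (-(11 / 16 : ℝ)) := by
        rw [← mul_assoc]
        gcongr 2 ^ 2 ^ 16 * ?_ * _
        exact Real.rpow_le_rpow_of_nonpos hW hWa (by norm_num : -(1 : ℝ) / 4 ≤ 0)

end Eta

theorem exists_sum_norm_etaConv_div_le :
    ∃ K : ℝ, 0 < K ∧ ∀ β hatβ : ℕ → ℂ, OneBoundedMult β → CompletelyMult hatβ →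
      (∀ p : ℕ, p.Prime → hatβ p = β p) → ∀ W M : ℕ, 0 < W →
        ∑ a ∈ Ioc W M, ‖etaConv β hatβ a‖ / a ≤ K * (W : ℝ) ^ (-(1 : ℝ) / 4) := by
  obtain ⟨Z, hZ⟩ : ∃ Z : ℝ, ∀ M : ℕ,
      ∑ a ∈ Icc 1 M with a.Powerful, (a : ℝ) ^ (-(11 / 16 : ℝ)) ≤ Z :=
    ⟨_, Nat.sum_powerful_rpow_neg_le (by norm_num)⟩
  have hZ1 : 1 ≤ Z := by
    have h := hZ 1
    rwa [Icc_self, filter_singleton, if_pos (by simp [Nat.Powerful]), sum_singleton,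
      Nat.cast_one, Real.one_rpow] at h
  refine ⟨2 ^ 2 ^ 16 * Z, by positivity, fun β hatβ hβ hhat hagree W M hW => ?_⟩
  have hhat' (n : ℕ) (hn : n ≠ 0) : ‖hatβ n‖ ≤ 1 :=
    hhat.norm_le_one (fun p hp => hagree p hp ▸ hβ.1 p) hn
  have hW' : (0 : ℝ) < W := by exact_mod_cast hW
  calc ∑ a ∈ Ioc W M, ‖etaConv β hatβ a‖ / a
      = ∑ a ∈ Ioc W M with a.Powerful, ‖etaConv β hatβ a‖ / a := by
        refine (sum_filter_of_ne fun a _ h => by_contra fun hpow => h ?_).symm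
        rw [etaConv_eq_zero_of_not_powerful hβ hhat hagree hpow, norm_zero, zero_div]
    _ ≤ ∑ a ∈ Ioc W M with a.Powerful,
          2 ^ 2 ^ 16 * (W : ℝ) ^ (-(1 : ℝ) / 4) * (a : ℝ) ^ (-(11 / 16 : ℝ)) :=
        sum_le_sum fun a ha => norm_etaConv_div_le hβ.1 hhat' hW'
          (by exact_mod_cast (mem_Ioc.mp (mem_filter.mp ha).1).1.le)
    _ ≤ ∑ a ∈ Icc 1 M with a.Powerful,
          2 ^ 2 ^ 16 * (W : ℝ) ^ (-(1 : ℝ) / 4) * (a : ℝ) ^ (-(11 / 16 : ℝ)) := by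
        refine sum_le_sum_of_subset_of_nonneg (filter_subset_filter _ fun a ha => ?_)
          fun a _ _ => by positivity
        obtain ⟨h1, h2⟩ := mem_Ioc.mp ha
        exact mem_Icc.mpr ⟨by omega, h2⟩
    _ ≤ 2 ^ 2 ^ 16 * Z * (W : ℝ) ^ (-(1 : ℝ) / 4) := by
        rw [← mul_sum, mul_right_comm]
        gcongr
        exact hZ M

theorem norm_sum_mul_sum_ite_le {ι κ α γ : Type*} {s : Finset ι} {t : Finset κ} {A : Finset α}
    {B : Finset γ} (f : α → ℂ) (P : ι → κ → α → γ → Prop) [∀ n k a b, Decidable (P n k a b)]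
    (c : ι → κ → α → γ → ℂ) (hc : ∀ n k a b, ‖c n k a b‖ ≤ 1) :
    ‖∑ n ∈ s, ∑ k ∈ t, ∑ a ∈ A, f a * ∑ b ∈ B, if P n k a b then c n k a b else 0‖ ≤
      ∑ a ∈ A, ‖f a‖ * ∑ n ∈ s, ∑ k ∈ t, ∑ b ∈ B, if P n k a b then (1 : ℝ) else 0 := by
  calc _ ≤ ∑ n ∈ s, ∑ k ∈ t, ∑ a ∈ A, ‖f a‖ * ∑ b ∈ B, if P n k a b then (1 : ℝ) else 0 := by
        refine (norm_sum_le _ _).trans <| sum_le_sum fun n _ => (norm_sum_le _ _).trans <|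
          sum_le_sum fun k _ => (norm_sum_le _ _).trans <| sum_le_sum fun a _ => ?_
        rw [norm_mul]
        gcongr
        refine (norm_sum_le _ _).trans <| sum_le_sum fun b _ => ?_
        split_ifs
        · exact hc n k a b
        · simp
    _ = _ := by
        simp only [mul_sum]
        exact (sum_congr rfl fun n _ => sum_comm).trans sum_comm

theorem sum_ite_mem_Ioc_mul_le (m : ℕ) (h x : ℝ) :
    ∑ k ∈ Icc 1 m, (if ((k : ℝ) - 1) * h < x ∧ x ≤ k * h then (1 : ℝ) else 0) ≤
      if 0 < x ∧ x ≤ m * h then 1 else 0 := by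
  rw [sum_boole]
  rcases eq_empty_or_nonempty {k ∈ Icc 1 m | ((k : ℕ) - 1 : ℝ) * h < x ∧ x ≤ k * h}
    with hS | ⟨k, hk⟩
  · rw [hS, card_empty, Nat.cast_zero]
    split_ifs <;> norm_num
  obtain ⟨hkm, hk1, hk2⟩ := mem_filter.mp hk
  obtain ⟨hk1m, hkm⟩ := mem_Icc.mp hkm
  have hh : 0 < h := by nlinarith
  have hk1m' : (1 : ℝ) ≤ k := by exact_mod_cast hk1m
  have hkm' : (k : ℝ) ≤ m := by exact_mod_cast hkm
  rw [if_pos ⟨by nlinarith, by nlinarith⟩, Nat.cast_le_one, card_le_one]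
  intro k' hk' l hl
  obtain ⟨-, hk'1, hk'2⟩ := mem_filter.mp hk'
  obtain ⟨-, hl1, hl2⟩ := mem_filter.mp hl
  have h1 : (k' : ℝ) < l + 1 := by nlinarith
  have h2 : (l : ℝ) < k' + 1 := by nlinarith
  have : k' < l + 1 := by exact_mod_cast h1
  have : l < k' + 1 := by exact_mod_cast h2
  omega

theorem sum_ite_lt_le_add_le (N H m : ℕ) :
    ∑ n ∈ Icc 1 N, (if n < m ∧ m ≤ n + H then (1 : ℝ) else 0) ≤
      if m ≤ N + H then (H : ℝ) else 0 := by
  rw [sum_boole]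
  split_ifs with hm
  · have hsub : {n ∈ Icc 1 N | n < m ∧ m ≤ n + H} ⊆ Ico (m - H) m := fun n hn => by
      obtain ⟨-, h1, h2⟩ := mem_filter.mp hn
      exact mem_Ico.mpr ⟨by omega, h1⟩
    have := (card_le_card hsub).trans_eq (Nat.card_Ico _ _)
    exact_mod_cast this.trans (by omega)
  · rw [filter_false_of_mem fun n hn h => hm (by have := (mem_Icc.mp hn).2; omega)]
    simp

theorem card_filter_mul_le_le_div {a : ℕ} (ha : 0 < a) (L M : ℕ) :
    #{b ∈ Icc 1 M | a * b ≤ L} ≤ L / a :=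
  (card_le_card fun b hb => by
    obtain ⟨hb, hab⟩ := mem_filter.mp hb
    exact mem_Icc.mpr ⟨(mem_Icc.mp hb).1, (Nat.le_div_iff_mul_le ha).mpr (by linarith)⟩).trans
    (by simp)

theorem sum_ite_mul_sub_mem_Ioc_le {W H N a : ℕ} (hW : 0 < W) (ha : 0 < a) :
    ∑ n ∈ Icc 1 N, ∑ k ∈ Icc 1 (W ^ 2), ∑ b ∈ Icc 1 (N + H),
      (if ((k : ℝ) - 1) * H / (W : ℝ) ^ 2 < ((a * b : ℕ) : ℝ) - (n : ℝ) ∧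
          ((a * b : ℕ) : ℝ) - (n : ℝ) ≤ (k : ℝ) * H / (W : ℝ) ^ 2 then (1 : ℝ) else 0) ≤
      H * (N + H) / a := by
  have hWH : ((W ^ 2 : ℕ) : ℝ) * (H / (W : ℝ) ^ 2) = H := by
    push_cast
    field_simp
  calc _ = ∑ n ∈ Icc 1 N, ∑ b ∈ Icc 1 (N + H), ∑ k ∈ Icc 1 (W ^ 2),
      (if ((k : ℝ) - 1) * H / (W : ℝ) ^ 2 < ((a * b : ℕ) : ℝ) - (n : ℝ) ∧
          ((a * b : ℕ) : ℝ) - (n : ℝ) ≤ (k : ℝ) * H / (W : ℝ) ^ 2 then (1 : ℝ) else 0) :=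
        sum_congr rfl fun n _ => sum_comm
    _ ≤ ∑ n ∈ Icc 1 N, ∑ b ∈ Icc 1 (N + H),
          if n < a * b ∧ a * b ≤ n + H then (1 : ℝ) else 0 := by
        gcongr with n _ b _
        simp only [mul_div_assoc]
        refine (sum_ite_mem_Ioc_mul_le (W ^ 2) _ _).trans_eq (if_congr ?_ rfl rfl)
        rw [hWH, sub_pos, sub_le_iff_le_add, add_comm (H : ℝ)]
        norm_cast
    _ = ∑ b ∈ Icc 1 (N + H), ∑ n ∈ Icc 1 N,
          if n < a * b ∧ a * b ≤ n + H then (1 : ℝ) else 0 := sum_comm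
    _ ≤ ∑ b ∈ Icc 1 (N + H), if a * b ≤ N + H then (H : ℝ) else 0 :=
        sum_le_sum fun b _ => sum_ite_lt_le_add_le N H (a * b)
    _ = H * #{b ∈ Icc 1 (N + H) | a * b ≤ N + H} := by
        rw [← sum_filter, sum_const, nsmul_eq_mul, mul_comm]
    _ ≤ H * (((N + H) / a : ℕ) : ℝ) := by
        gcongr
        exact_mod_cast card_filter_mul_le_le_div ha _ _
    _ ≤ H * (N + H) / a := by
        rw [mul_div_assoc]
        gcongr
        exact_mod_cast Nat.cast_div_le (α := ℝ) (m := N + H) (n := a)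

/-- The tail (`a > W`) of the expansion `β = β̂ * η` contributes at most
`C W^{-1/4} H N` to the bilinear sum, for any `1`-bounded weights `c(n,k,a,b)` attached
to the quadruples with `ab ∈ n + I_k`, `I_k = ((k-1)W⁻²H, kW⁻²H]`. -/
theorem stmt6 :
    ∃ C : ℝ, 0 < C ∧
      ∀ (W H N : ℕ), 10 ≤ W → W ^ 12 ≤ H → H ≤ N →
        ∀ β hatβ : ℕ → ℂ, OneBoundedMult β → CompletelyMult hatβ →
          (∀ p : ℕ, p.Prime → hatβ p = β p) →
        ∀ c : ℕ → ℕ → ℕ → ℕ → ℂ, (∀ n k a b, ‖c n k a b‖ ≤ 1) →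
          ‖∑ n ∈ Finset.Icc 1 N, ∑ k ∈ Finset.Icc 1 (W ^ 2),
              ∑ a ∈ Finset.Ioc W (N + H), etaConv β hatβ a *
                ∑ b ∈ Finset.Icc 1 (N + H),
                  (if ((k : ℝ) - 1) * H / (W : ℝ) ^ 2 < ((a * b : ℕ) : ℝ) - (n : ℝ) ∧
                      ((a * b : ℕ) : ℝ) - (n : ℝ) ≤ (k : ℝ) * H / (W : ℝ) ^ 2
                   then c n k a b else 0)‖
            ≤ C * (W : ℝ) ^ (-(1 : ℝ) / 4) * (H : ℝ) * (N : ℝ) := by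
  obtain ⟨K, hK, htail⟩ := exists_sum_norm_etaConv_div_le
  refine ⟨2 * K, by positivity, fun W H N hW _ hHN β hatβ hβ hhat hagree c hc => ?_⟩
  have hW0 : 0 < W := by omega
  have hNH : (N + H : ℝ) ≤ 2 * N := by
    have : (H : ℝ) ≤ N := by exact_mod_cast hHN
    linarith
  calc _ ≤ ∑ a ∈ Ioc W (N + H), ‖etaConv β hatβ a‖ * (H * (N + H) / a) :=
        (norm_sum_mul_sum_ite_le _ _ c hc).trans <| sum_le_sum fun a ha =>
          mul_le_mul_of_nonneg_left
            (sum_ite_mul_sub_mem_Ioc_le hW0 (by have := (mem_Ioc.mp ha).1; omega)) (norm_nonneg _)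
    _ = H * (N + H) * ∑ a ∈ Ioc W (N + H), ‖etaConv β hatβ a‖ / a := by
        rw [mul_sum]
        exact sum_congr rfl fun a _ => by ring
    _ ≤ H * (2 * N) * (K * (W : ℝ) ^ (-(1 : ℝ) / 4)) := by
        gcongr
        exact htail β hatβ hβ hhat hagree W (N + H) hW0
    _ = 2 * K * (W : ℝ) ^ (-(1 : ℝ) / 4) * H * N := by ring
end

section
/- Let H, W, q be positive integers with W \ge 2 and q \in (W/2, W], and let p₁ be a prime with p₁ > W and H \ge p₁ W^3. Then for every configuration 𝐧₁ = (n₁,k₁,j₁), \#A_{𝐧₁,p₁} \le 4 \cdot p₁^{−1} \cdot W^{−3} \cdot H; in particular, for every configuration 𝐧₂ and every prime p₂, \#A_{𝐧₁,𝐧₂,p₁,p₂} \le 4 \cdot p₁^{−1} \cdot W^{−3} \cdot H. -/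
open Finset

noncomputable def Aprog (H W q : ℕ) (c : ℕ × ℕ × ℕ) (p : ℕ) : Finset ℕ :=
  (Finset.Icc 1 (c.1 + H)).filter (fun l =>
    ((c.2.1 : ℝ) - 1) * H / (W : ℝ) ^ 2 < ((p * l : ℕ) : ℝ) - (c.1 : ℝ) ∧
    ((p * l : ℕ) : ℝ) - (c.1 : ℝ) ≤ (c.2.1 : ℝ) * H / (W : ℝ) ^ 2 ∧
    (p * l) % q = c.2.2)

noncomputable def Ainter (H W q : ℕ) (c₁ c₂ : ℕ × ℕ × ℕ) (p₁ p₂ : ℕ) : Finset ℕ :=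
  Aprog H W q c₁ p₁ ∩ Aprog H W q c₂ p₂

/-!
For `l ∈ A_{𝐧,p}` the number `pl` runs through an interval of length `H/W²` inside one residue
class mod `q`; as `p` is invertible mod `q`, `l` itself lies in one residue class mod `q` and in
an interval of length `H/(pW²)`. Hence `#A_{𝐧,p} ≤ H/(pqW²) + 1`, and `q > W/2`, `H ≥ pW³`
turn this into `4H/(pW³)`.
-/

theorem Finset.card_le_div_add_one_of_modEq {S : Finset ℕ} {q D : ℕ}
    (hmod : ∀ a ∈ S, ∀ b ∈ S, a ≡ b [MOD q])
    (hdiam : ∀ a ∈ S, ∀ b ∈ S, a ≤ b → b - a ≤ D) :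
    #S ≤ D / q + 1 := by
  rcases S.eq_empty_or_nonempty with rfl | hS
  · simp
  set l₀ := S.min' hS
  have hsub : S ⊆ (range (D / q + 1)).image (fun t => l₀ + q * t) := by
    intro l hl
    have hle : l₀ ≤ l := S.min'_le l hl
    have hdvd : q ∣ l - l₀ := (Nat.modEq_iff_dvd' hle).mp (hmod _ (S.min'_mem hS) l hl)
    refine mem_image.mpr ⟨(l - l₀) / q, ?_, ?_⟩
    · exact mem_range_succ_iff.mpr (Nat.div_le_div_right (hdiam _ (S.min'_mem hS) l hl hle))
    · rw [Nat.mul_div_cancel' hdvd]; omega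
  calc #S ≤ #((range (D / q + 1)).image (fun t => l₀ + q * t)) := card_le_card hsub
    _ ≤ D / q + 1 := card_image_le.trans (card_range _).le

section Aprog

variable {H W q p : ℕ} {c : ℕ × ℕ × ℕ} {a b : ℕ}

theorem Aprog_modEq (hcop : Nat.Coprime q p)
    (ha : a ∈ Aprog H W q c p) (hb : b ∈ Aprog H W q c p) : a ≡ b [MOD q] :=
  Nat.ModEq.cancel_left_of_coprime hcop
    (((mem_filter.mp ha).2.2.2).trans ((mem_filter.mp hb).2.2.2).symm)

theorem Aprog_sub_le (hW : 0 < W) (hp : 0 < p)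
    (ha : a ∈ Aprog H W q c p) (hb : b ∈ Aprog H W q c p) (hab : a ≤ b) :
    b - a ≤ H / (p * W ^ 2) := by
  obtain ⟨-, ha₁, -, -⟩ := mem_filter.mp ha
  obtain ⟨-, -, hb₂, -⟩ := mem_filter.mp hb
  have hW2 : (0 : ℝ) < (W : ℝ) ^ 2 := by positivity
  have hreal : ((p * (b - a) * W ^ 2 : ℕ) : ℝ) < H := by
    rw [Nat.cast_mul, Nat.cast_mul, Nat.cast_sub hab, Nat.cast_pow, ← lt_div_iff₀ hW2]
    push_cast at ha₁ hb₂ ⊢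
    have : (c.2.1 : ℝ) * H / (W : ℝ) ^ 2 - ((c.2.1 : ℝ) - 1) * H / (W : ℝ) ^ 2
        = (H : ℝ) / (W : ℝ) ^ 2 := by ring
    linarith
  rw [Nat.le_div_iff_mul_le (by positivity)]
  calc (b - a) * (p * W ^ 2) = p * (b - a) * W ^ 2 := by ring
    _ ≤ H := (Nat.cast_lt.mp hreal).le

theorem card_Aprog_le (hW : 0 < W) (hp : 0 < p) (hcop : Nat.Coprime q p) :
    #(Aprog H W q c p) ≤ H / (p * W ^ 2 * q) + 1 := by
  rw [← Nat.div_div_eq_div_mul]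
  exact Finset.card_le_div_add_one_of_modEq
    (fun _ ha _ hb => Aprog_modEq hcop ha hb)
    (fun _ ha _ hb hab => Aprog_sub_le hW hp ha hb hab)

theorem card_Aprog_le_four_mul (hq1 : (W : ℝ) / 2 < (q : ℝ)) (hq2 : q ≤ W)
    (hp : p.Prime) (hpW : W < p) (hHp : p * W ^ 3 ≤ H) :
    (#(Aprog H W q c p) : ℝ) ≤ 4 * (p : ℝ)⁻¹ * ((W : ℝ) ^ 3)⁻¹ * H := by
  have hq : 0 < q := by
    have : (0 : ℝ) < q := lt_of_le_of_lt (by positivity) hq1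
    exact_mod_cast this
  have hW : 0 < W := hq.trans_le hq2
  have hcop : Nat.Coprime q p := (Nat.coprime_of_lt_prime hq.ne' (hq2.trans_lt hpW) hp).symm
  have hPr : (0 : ℝ) < p := by exact_mod_cast hp.pos
  have hQr : (0 : ℝ) < q := by exact_mod_cast hq
  have hWr : (0 : ℝ) < W := by exact_mod_cast hW
  set x : ℝ := H / (p * W ^ 3) with hx_def
  have hx : 1 ≤ x := by
    rw [one_le_div (by positivity)]
    exact_mod_cast hHp
  have hxq : (H : ℝ) / (p * W ^ 2 * q) ≤ 2 * x := by
    have hWq : (W : ℝ) / q ≤ 2 := by rw [div_le_iff₀ hQr]; linarith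
    calc (H : ℝ) / (p * W ^ 2 * q) = x * (W / q) := by rw [hx_def]; field_simp
      _ ≤ x * 2 := by gcongr
      _ = 2 * x := mul_comm _ _
  calc (#(Aprog H W q c p) : ℝ) ≤ ((H / (p * W ^ 2 * q) + 1 : ℕ) : ℝ) := by
        exact_mod_cast card_Aprog_le hW hp.pos hcop
    _ ≤ (H : ℝ) / (p * W ^ 2 * q) + 1 := by
        push_cast
        gcongr
        exact_mod_cast Nat.cast_div_le (α := ℝ) (m := H) (n := p * W ^ 2 * q)
    _ ≤ 4 * x := by linarith
    _ = 4 * (p : ℝ)⁻¹ * ((W : ℝ) ^ 3)⁻¹ * H := by rw [hx_def]; ring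

end Aprog

theorem stmt12_general (H W q p₁ : ℕ)
    (hq1 : (W : ℝ) / 2 < (q : ℝ)) (hq2 : q ≤ W)
    (hp : p₁.Prime) (hpW : W < p₁) (hHp : p₁ * W ^ 3 ≤ H)
    (c₁ : ℕ × ℕ × ℕ) :
    ((Aprog H W q c₁ p₁).card : ℝ) ≤ 4 * (p₁ : ℝ)⁻¹ * ((W : ℝ) ^ 3)⁻¹ * H ∧
      ∀ (c₂ : ℕ × ℕ × ℕ) (p₂ : ℕ), p₂.Prime →
        ((Ainter H W q c₁ c₂ p₁ p₂).card : ℝ)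
          ≤ 4 * (p₁ : ℝ)⁻¹ * ((W : ℝ) ^ 3)⁻¹ * H := by
  have hA := card_Aprog_le_four_mul (c := c₁) hq1 hq2 hp hpW hHp
  refine ⟨hA, fun c₂ p₂ _ => le_trans ?_ hA⟩
  exact_mod_cast card_le_card inter_subset_left

/-- `#A_{𝐧₁,p₁} ≤ 4 p₁⁻¹ W⁻³ H`, and the same bound for every intersection
`A_{𝐧₁,𝐧₂,p₁,p₂}`. -/
theorem stmt12 (H W q p₁ : ℕ) (hH : 0 < H) (hW : 2 ≤ W)
    (hq1 : (W : ℝ) / 2 < (q : ℝ)) (hq2 : q ≤ W)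
    (hp : p₁.Prime) (hpW : W < p₁) (hHp : p₁ * W ^ 3 ≤ H)
    (c₁ : ℕ × ℕ × ℕ) (hk1 : 1 ≤ c₁.2.1) (hk2 : c₁.2.1 ≤ W ^ 2) (hj : c₁.2.2 < q) :
    ((Aprog H W q c₁ p₁).card : ℝ) ≤ 4 * (p₁ : ℝ)⁻¹ * ((W : ℝ) ^ 3)⁻¹ * H ∧
      ∀ (c₂ : ℕ × ℕ × ℕ) (p₂ : ℕ), p₂.Prime →
        ((Ainter H W q c₁ c₂ p₁ p₂).card : ℝ)
          ≤ 4 * (p₁ : ℝ)⁻¹ * ((W : ℝ) ^ 3)⁻¹ * H :=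
  stmt12_general H W q p₁ hq1 hq2 hp hpW hHp c₁
end

section
/- Let H, W, q be positive integers with W \ge 2 and q \in (W/2, W], and let p be a prime with p > W and H \ge 4 p W^3. Then for every configuration 𝐧 = (n,k,j), \#A_{𝐧,p} \ge (1/2) \cdot p^{−1} \cdot W^{−3} \cdot H. -/
open Finset

set_option maxHeartbeats 1000000 in
/-- If `p > W` is prime and `H ≥ 4 p W³`, then for every configuration `𝐧`,
`#A_{𝐧,p} ≥ (1/2) p⁻¹ W⁻³ H`. -/
theorem stmt14 (H W q p : ℕ) (hH : 0 < H) (hW : 2 ≤ W)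
    (hq1 : (W : ℝ) / 2 < (q : ℝ)) (hq2 : q ≤ W)
    (hp : p.Prime) (hpW : W < p) (hHp : 4 * p * W ^ 3 ≤ H)
    (c : ℕ × ℕ × ℕ) (hk1 : 1 ≤ c.2.1) (hk2 : c.2.1 ≤ W ^ 2) (hj : c.2.2 < q) :
    (1 / 2 : ℝ) * (p : ℝ)⁻¹ * ((W : ℝ) ^ 3)⁻¹ * H ≤ ((Aprog H W q c p).card : ℝ) := by
  obtain ⟨n, k, j⟩ := c
  simp only at hk1 hk2 hj
  have hq0 : 0 < q := by omega
  have hp0 : 0 < p := hp.pos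
  have hW0 : 0 < W := by omega
  haveI : NeZero q := ⟨hq0.ne'⟩
  have hcop : Nat.Coprime p q := (Nat.Prime.coprime_iff_not_dvd hp).mpr (fun h => by
    have := Nat.le_of_dvd hq0 h; omega)
  obtain ⟨u, hu_lt, hpu⟩ : ∃ u, u < q ∧ (p * u) % q = j := by
    refine ⟨((p : ZMod q)⁻¹ * (j : ZMod q)).val, ZMod.val_lt _, ?_⟩
    have hunit : IsUnit (p : ZMod q) := (ZMod.isUnit_iff_coprime p q).mpr hcop
    have h1 : ((p * ((p : ZMod q)⁻¹ * (j : ZMod q)).val : ℕ) : ZMod q) = (j : ZMod q) := by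
      push_cast
      rw [ZMod.natCast_val, ZMod.cast_id, ← mul_assoc, ZMod.mul_inv_of_unit _ hunit, one_mul]
    have h2 := (ZMod.natCast_eq_natCast_iff _ _ _).mp h1
    rwa [Nat.ModEq, Nat.mod_eq_of_lt hj] at h2
  obtain ⟨P, hP⟩ : ∃ x, x = p * W ^ 2 := ⟨_, rfl⟩
  obtain ⟨N, hN⟩ : ∃ x, x = n * W ^ 2 + (k - 1) * H := ⟨_, rfl⟩
  obtain ⟨b, hb⟩ : ∃ x, x = N / P + 1 := ⟨_, rfl⟩
  obtain ⟨l₀, hl₀⟩ : ∃ x, x = q * (b / q + 1) + u := ⟨_, rfl⟩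
  obtain ⟨D, hD⟩ : ∃ x, x = q * P := ⟨_, rfl⟩
  obtain ⟨m, hm⟩ : ∃ x, x = H / D - 1 := ⟨_, rfl⟩
  have hP0 : 0 < P := by rw [hP]; positivity
  have hD0 : 0 < D := by rw [hD]; positivity
  have hbN : N < P * b := by
    have h := Nat.div_add_mod N P
    have h2 := Nat.mod_lt N hP0
    have h3 : P * b = P * (N / P) + P := by rw [hb]; ring
    omega
  have hbub : P * b ≤ N + P := by
    have h := Nat.div_add_mod N P
    have h3 : P * b = P * (N / P) + P := by rw [hb]; ring
    omega
  have hl₀b : b ≤ l₀ ∧ l₀ + 1 ≤ b + 2 * q := by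
    have h := Nat.div_add_mod b q
    have h2 := Nat.mod_lt b hq0
    have h3 : q * (b / q + 1) = q * (b / q) + q := by ring
    omega
  have hDle : D ≤ p * W ^ 3 := by
    rw [hD, hP]
    calc q * (p * W ^ 2) ≤ W * (p * W ^ 2) := Nat.mul_le_mul_right _ hq2
    _ = p * W ^ 3 := by ring
  have hPW3 : 4 * p * W ^ 3 = 4 * (p * W ^ 3) := by ring
  have h4D : 4 * D ≤ H := by omega
  have hHDge : 4 ≤ H / D := (Nat.le_div_iff_mul_le hD0).mpr (by omega)
  have hm1 : m + 1 = H / D := by omega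
  have hmD : (m + 1) * D ≤ H := by rw [hm1]; exact Nat.div_mul_le_self H D
  have hHm : H ≤ 2 * p * W ^ 3 * m := by
    have h := Nat.div_add_mod H D
    have h2 := Nat.mod_lt H hD0
    have h6 : (m + 2) * D = D * (H / D) + D := by
      have he : m + 2 = H / D + 1 := by omega
      rw [he]; ring
    have h5 : H < (m + 2) * D := by omega
    have h7 : (m + 2) * D ≤ (m + 2) * (p * W ^ 3) := Nat.mul_le_mul_left _ hDle
    have h8 : (m + 2) * (p * W ^ 3) = m * (p * W ^ 3) + 2 * (p * W ^ 3) := by ring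
    have h10 : 2 * p * W ^ 3 * m = m * (p * W ^ 3) + m * (p * W ^ 3) := by ring
    omega
  have hl₀ub : P * l₀ + P ≤ N + P + 2 * D := by
    calc P * l₀ + P = P * (l₀ + 1) := by ring
    _ ≤ P * (b + 2 * q) := Nat.mul_le_mul_left _ hl₀b.2
    _ = P * b + 2 * D := by rw [hD]; ring
    _ ≤ N + P + 2 * D := by omega
  have hmem : ∀ t ∈ Finset.range m, l₀ + t * q ∈ Aprog H W q (n, k, j) p := by
    intro t ht
    simp only [Finset.mem_range] at ht
    have key1 : N < P * (l₀ + t * q) :=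
      lt_of_lt_of_le hbN (Nat.mul_le_mul_left _ (by omega))
    have key2 : P * (l₀ + t * q) ≤ N + H := by
      have e2 : P * (l₀ + t * q) = P * l₀ + t * D := by rw [hD]; ring
      have e3 : t * D ≤ (m - 1) * D := Nat.mul_le_mul_right _ (by omega)
      have e4 : (m - 1) * D + 2 * D = (m + 1) * D := by
        have hh : m - 1 + 2 = m + 1 := by omega
        calc (m - 1) * D + 2 * D = (m - 1 + 2) * D := by ring
        _ = (m + 1) * D := by rw [hh]
      omega
    refine Finset.mem_filter.mpr ⟨Finset.mem_Icc.mpr ⟨?_, ?_⟩, ?_, ?_, ?_⟩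
    · have hb1 : 1 ≤ b := by rw [hb]; exact Nat.le_add_left 1 _
      omega
    · have e7a : (k - 1 + 1) * H ≤ W ^ 2 * H := Nat.mul_le_mul_right _ (by omega)
      have e7b : N + H = n * W ^ 2 + (k - 1 + 1) * H := by rw [hN]; ring
      have e7c : W ^ 2 * (n + H) = n * W ^ 2 + W ^ 2 * H := by ring
      have e7 : N + H ≤ W ^ 2 * (n + H) := by omega
      have e8 : W ^ 2 * (l₀ + t * q) ≤ P * (l₀ + t * q) := by
        rw [hP]; exact Nat.mul_le_mul_right _ (Nat.le_mul_of_pos_left _ hp0)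
      have e9 : W ^ 2 * (l₀ + t * q) ≤ W ^ 2 * (n + H) := by omega
      exact Nat.le_of_mul_le_mul_left e9 (by positivity)
    · rw [div_lt_iff₀ (by positivity : (0:ℝ) < (W : ℝ) ^ 2)]
      have hc : ((N : ℕ) : ℝ) < ((P * (l₀ + t * q) : ℕ) : ℝ) := Nat.cast_lt.mpr key1
      rw [hN, hP] at hc
      push_cast [Nat.cast_sub hk1] at hc ⊢
      nlinarith [hc]
    · rw [le_div_iff₀ (by positivity : (0:ℝ) < (W : ℝ) ^ 2)]
      have hc : ((P * (l₀ + t * q) : ℕ) : ℝ) ≤ ((N + H : ℕ) : ℝ) := Nat.cast_le.mpr key2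
      rw [hN, hP] at hc
      push_cast [Nat.cast_sub hk1] at hc ⊢
      nlinarith [hc]
    · have e9 : p * (l₀ + t * q) = p * u + q * (p * (b / q + 1 + t)) := by rw [hl₀]; ring
      simp only []
      rw [e9, Nat.add_mul_mod_self_left, hpu]
  have hinj : Set.InjOn (fun t => l₀ + t * q) (Finset.range m) := by
    intro a _ b' _ h
    simp only at h
    have hq' : a * q = b' * q := by omega
    exact Nat.eq_of_mul_eq_mul_right hq0 hq'
  have hcard : m ≤ (Aprog H W q (n, k, j) p).card := by
    have h := Finset.card_le_card_of_injOn (fun t => l₀ + t * q) hmem hinj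
    simpa using h
  have hfin : (H : ℝ) ≤ 2 * (p : ℝ) * (W : ℝ) ^ 3 * (m : ℝ) := by exact_mod_cast hHm
  have hcard' : (m : ℝ) ≤ ((Aprog H W q (n, k, j) p).card : ℝ) := Nat.cast_le.mpr hcard
  have hpos : (0 : ℝ) < 2 * (p : ℝ) * (W : ℝ) ^ 3 := by positivity
  calc (1 / 2 : ℝ) * (p : ℝ)⁻¹ * ((W : ℝ) ^ 3)⁻¹ * H
      = (H : ℝ) / (2 * (p : ℝ) * (W : ℝ) ^ 3) := by ring
  _ ≤ (m : ℝ) := by rw [div_le_iff₀ hpos]; nlinarith [hfin]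
  _ ≤ _ := hcard'
end

section
/- There is an absolute constant C > 0 such that the following holds. Let H, N, W, q, s be positive integers with W \ge 10, q \in (W/2, W], 2^s \ge W and H \ge 2^s W^3, and let B \ge 10 be a real number. Let 𝒩 \subseteq \{1, ..., N\}; for every configuration 𝐧 = (n,k,j) with n \in 𝒩 let u_𝐧 : ℤ → ℂ satisfy |u_𝐧| \le 2, and let w(p₁,p₂) be complex numbers with |w| \le 1. For a configuration 𝐧₁ with first coordinate in 𝒩 and a prime p₁ \in (2^{s−1}, 2^s], let Ω_{𝐧₁,p₁} denote the set of pairs (𝐧₂, p₂) where 𝐧₂ = (n₂,k₂,j₂) is a configuration with n₂ \in 𝒩 and p₂ \in (2^{s−1}, 2^s] is prime, such that \#A_{𝐧₁,𝐧₂,p₁,p₂} \ge 2^{−s} W^{−(B+3)} H and |\sum_{l \in A_{𝐧₁,𝐧₂,p₁,p₂}} u_{𝐧₁}(p₁ l − n₁) \cdot conj(u_{𝐧₂}(p₂ l − n₂))| \ge W^{−B} \#A_{𝐧₁,𝐧₂,p₁,p₂}. Assume \#Ω_{𝐧₁,p₁} < 2^s W^{−B} H for every such pair (𝐧₁, p₁).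 Then |\sum_{𝐧₁,𝐧₂} \sum_{p₁,p₂ : \#A_{𝐧₁,𝐧₂,p₁,p₂} \ge 2^{−s} W^{−(B+3)} H} w(p₁,p₂) \sum_{l \in A_{𝐧₁,𝐧₂,p₁,p₂}} u_{𝐧₁}(p₁ l − n₁) \cdot conj(u_{𝐧₂}(p₂ l − n₂))| \le C \cdot 2^s \cdot W^{−B} \cdot H^2 \cdot N, where the configuration sums range over configurations with first coordinates in 𝒩 and the prime sums over primes p₁, p₂ \in (2^{s−1}, 2^s]. -/
open Finset

/-- The configurations `(n,k,j)` with `n ∈ 𝒩`, `1 ≤ k ≤ W²`, `0 ≤ j ≤ q-1`. -/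
def cfgs (𝒩 : Finset ℕ) (W q : ℕ) : Finset (ℕ × ℕ × ℕ) :=
  𝒩 ×ˢ (Finset.Icc 1 (W ^ 2) ×ˢ Finset.range q)

/-- The primes in `(2^{s-1}, 2^s]`. -/
def primesDya (s : ℕ) : Finset ℕ :=
  (Finset.Ioc (2 ^ (s - 1)) (2 ^ s)).filter Nat.Prime

/-- The correlation sum `∑_{l ∈ A_{𝐧₁,𝐧₂,p₁,p₂}} u_{𝐧₁}(p₁l − n₁) conj(u_{𝐧₂}(p₂l − n₂))`. -/
noncomputable def corrSum (H W q : ℕ) (u : (ℕ × ℕ × ℕ) → ℤ → ℂ)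
    (c₁ c₂ : ℕ × ℕ × ℕ) (p₁ p₂ : ℕ) : ℂ :=
  ∑ l ∈ Ainter H W q c₁ c₂ p₁ p₂,
    u c₁ ((p₁ : ℤ) * l - c₁.1) * (starRingEnd ℂ) (u c₂ ((p₂ : ℤ) * l - c₂.1))

/-- The exceptional set `Ω_{𝐧₁,p₁}` of pairs `(𝐧₂, p₂)` such that
`#A_{𝐧₁,𝐧₂,p₁,p₂} ≥ 2^{-s} W^{-(B+3)} H` and the correlation sum is at least
`W^{-B} #A_{𝐧₁,𝐧₂,p₁,p₂}` in absolute value. -/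
noncomputable def OmegaSet (H W q s : ℕ) (B : ℝ) (𝒩 : Finset ℕ)
    (u : (ℕ × ℕ × ℕ) → ℤ → ℂ) (c₁ : ℕ × ℕ × ℕ) (p₁ : ℕ) :
    Finset ((ℕ × ℕ × ℕ) × ℕ) :=
  (cfgs 𝒩 W q ×ˢ primesDya s).filter (fun x =>
    (2 : ℝ) ^ (-(s : ℝ)) * (W : ℝ) ^ (-(B + 3)) * H
        ≤ ((Ainter H W q c₁ x.1 p₁ x.2).card : ℝ) ∧
    (W : ℝ) ^ (-B) * ((Ainter H W q c₁ x.1 p₁ x.2).card : ℝ)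
        ≤ ‖corrSum H W q u c₁ x.1 p₁ x.2‖)

/-!
Fix `(𝐧₁, p₁)` and split the pairs `(𝐧₂, p₂)` according to membership in `Ω_{𝐧₁,p₁}`.
Outside `Ω` a surviving term is at most `W^{-B} #A_{𝐧₁,𝐧₂,p₁,p₂}`. For fixed `p₂`, an element
`l` of `A_{𝐧₁,p₁}` lies in `A_{𝐧₂,p₂}` for at most `H` configurations `𝐧₂`, because
`n₂ ∈ [p₂l - H, p₂l)` and `n₂` determines `k₂` and `j₂`; so these terms add up to at most
`2^s W^{-B} H #A_{𝐧₁,p₁}`. A term inside `Ω` is at most `4 #A_{𝐧₁,p₁}`, and there are fewer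
than `2^s W^{-B} H` of them. Finally, for fixed `n` and `p` the sets `A_{(n,k,j),p}` are disjoint
subsets of `{l : n < pl ≤ n + H}`, so `∑_{𝐧₁,p₁} #A_{𝐧₁,p₁} ≤ 2NH`, and `C = 10` works.
-/

theorem sum_card_inter_le_card_mul {ι α : Type*} [DecidableEq α] {s : Finset α} {I : Finset ι}
    {t : ι → Finset α} {n : ℕ} (h : ∀ a ∈ s, #{i ∈ I | a ∈ t i} ≤ n) :
    ∑ i ∈ I, #(s ∩ t i) ≤ #s * n := by
  refine le_trans ?_ (s.sum_le_card_nsmul _ _ h)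
  simp_rw [← filter_mem_eq_inter, card_eq_sum_ones, sum_filter]
  exact sum_comm.le

theorem sum_le_of_le_off_exceptional {ι : Type*} [DecidableEq ι] {s Ω : Finset ι} {f a : ι → ℝ}
    {ε b : ℝ} (hΩ : Ω ⊆ s) (hε : 0 ≤ ε) (ha : ∀ i ∈ s, 0 ≤ a i) (hb : ∀ i ∈ Ω, f i ≤ b)
    (hgood : ∀ i ∈ s \ Ω, f i ≤ ε * a i) :
    ∑ i ∈ s, f i ≤ ε * ∑ i ∈ s, a i + #Ω * b := by
  rw [← sum_sdiff hΩ, mul_sum]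
  gcongr ?_ + ?_
  · calc ∑ i ∈ s \ Ω, f i ≤ ∑ i ∈ s \ Ω, ε * a i := sum_le_sum hgood
      _ ≤ ∑ i ∈ s, ε * a i :=
        sum_le_sum_of_subset_of_nonneg sdiff_subset fun i hi _ => mul_nonneg hε (ha i hi)
  · simpa using sum_le_card_nsmul Ω f b hb

theorem norm_sum_sum_sum_sum_le {α β E : Type*} [SeminormedAddCommGroup E] (S : Finset α)
    (P : Finset β) (F : α → α → β → β → E) :
    ‖∑ a ∈ S, ∑ a' ∈ S, ∑ b ∈ P, ∑ b' ∈ P, F a a' b b'‖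
      ≤ ∑ a ∈ S, ∑ b ∈ P, ∑ x ∈ S ×ˢ P, ‖F a x.1 b x.2‖ := by
  simp_rw [sum_product]
  refine (norm_sum_le _ _).trans (sum_le_sum fun a _ => ?_)
  rw [sum_comm]
  exact (norm_sum_le _ _).trans (sum_le_sum fun b _ => (norm_sum_le _ _).trans
    (sum_le_sum fun a' _ => norm_sum_le _ _))

theorem eq_of_mem_Ioc_sub_one_mul {a x : ℝ} {k k' : ℕ}
    (h : x ∈ Set.Ioc (((k : ℝ) - 1) * a) (k * a))
    (h' : x ∈ Set.Ioc (((k' : ℝ) - 1) * a) (k' * a)) : k = k' := by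
  obtain ⟨h₁, h₂⟩ := h
  obtain ⟨h₁', h₂'⟩ := h'
  have ha : 0 < a := by nlinarith
  by_contra hne
  rcases Nat.lt_or_gt_of_ne hne with hlt | hlt
  · have : (k : ℝ) + 1 ≤ k' := by exact_mod_cast hlt
    nlinarith
  · have : (k' : ℝ) + 1 ≤ k := by exact_mod_cast hlt
    nlinarith

theorem mem_Aprog {H W q p l : ℕ} {c : ℕ × ℕ × ℕ} :
    l ∈ Aprog H W q c p ↔ l ∈ Icc 1 (c.1 + H) ∧
      ((p * l : ℕ) : ℝ) - c.1 ∈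
        Set.Ioc (((c.2.1 : ℝ) - 1) * ((H : ℝ) / W ^ 2)) (c.2.1 * ((H : ℝ) / W ^ 2)) ∧
      p * l % q = c.2.2 := by
  simp only [Aprog, mem_filter, Set.mem_Ioc, mul_div_assoc, and_assoc]

theorem pairwiseDisjoint_Aprog (H W q n p : ℕ) :
    (Set.univ : Set (ℕ × ℕ)).PairwiseDisjoint fun kj => Aprog H W q (n, kj) p := by
  rintro ⟨k, j⟩ - ⟨k', j'⟩ - hne
  refine disjoint_left.2 fun l hl hl' => hne ?_
  rw [mem_Aprog] at hl hl'
  exact Prod.ext (eq_of_mem_Ioc_sub_one_mul hl.2.1 hl'.2.1) (hl.2.2.symm.trans hl'.2.2)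

theorem mul_mem_Ioc_of_mem_Aprog {H W q p l : ℕ} {c : ℕ × ℕ × ℕ}
    (hk : c.2.1 ∈ Icc 1 (W ^ 2)) (hl : l ∈ Aprog H W q c p) : p * l ∈ Ioc c.1 (c.1 + H) := by
  obtain ⟨hk₁, hk₂⟩ := mem_Icc.1 hk
  obtain ⟨-, ⟨hlo, hhi⟩, -⟩ := mem_Aprog.1 hl
  have hk₁' : (1 : ℝ) ≤ c.2.1 := by exact_mod_cast hk₁
  have hk₂' : (c.2.1 : ℝ) ≤ W ^ 2 := by exact_mod_cast hk₂
  have hW : (W : ℝ) ^ 2 ≠ 0 := (zero_lt_one.trans_le (hk₁'.trans hk₂')).ne'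
  have ha : 0 ≤ (H : ℝ) / W ^ 2 := by positivity
  have htop : (c.2.1 : ℝ) * (H / W ^ 2) ≤ H :=
    (mul_le_mul_of_nonneg_right hk₂' ha).trans_eq (mul_div_cancel₀ _ hW)
  have hlo' : (c.1 : ℝ) < (p * l : ℕ) := by nlinarith
  have hhi' : ((p * l : ℕ) : ℝ) ≤ c.1 + H := by linarith
  exact mem_Ioc.2 ⟨by exact_mod_cast hlo', by exact_mod_cast hhi'⟩

theorem card_filter_mem_Aprog_le (𝒩 : Finset ℕ) (H W q p l : ℕ) :
    #{c ∈ cfgs 𝒩 W q | l ∈ Aprog H W q c p} ≤ H := by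
  have hk : ∀ c ∈ cfgs 𝒩 W q, c.2.1 ∈ Icc 1 (W ^ 2) := fun c hc =>
    (mem_product.1 (mem_product.1 hc).2).1
  calc #{c ∈ cfgs 𝒩 W q | l ∈ Aprog H W q c p} ≤ #(Ico (p * l - H) (p * l)) := by
        refine card_le_card_of_injOn Prod.fst (fun c hc => ?_) fun c hc c' hc' hcc => ?_
        · obtain ⟨hc, hl⟩ := mem_filter.1 hc
          have := mem_Ioc.1 (mul_mem_Ioc_of_mem_Aprog (hk c hc) hl)
          simp only [coe_Ico, Set.mem_Ico]
          omega
        · obtain ⟨hc, hl⟩ := mem_filter.1 hc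
          obtain ⟨-, hl'⟩ := mem_filter.1 hc'
          obtain ⟨n, kj⟩ := c
          obtain ⟨n', kj'⟩ := c'
          obtain rfl : n = n' := hcc
          rw [(pairwiseDisjoint_Aprog H W q n p).elim_finset (Set.mem_univ kj)
            (Set.mem_univ kj') l hl hl']
    _ ≤ H := by rw [Nat.card_Ico]; omega

theorem sum_card_Ainter_le (𝒩 : Finset ℕ) (H W q : ℕ) (c₁ : ℕ × ℕ × ℕ) (p₁ p₂ : ℕ) :
    ∑ c₂ ∈ cfgs 𝒩 W q, #(Ainter H W q c₁ c₂ p₁ p₂) ≤ #(Aprog H W q c₁ p₁) * H :=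
  sum_card_inter_le_card_mul fun l _ => card_filter_mem_Aprog_le 𝒩 H W q p₂ l

theorem sum_card_Aprog_le {H W q n p : ℕ} (hp : 0 < p) :
    ∑ kj ∈ Icc 1 (W ^ 2) ×ˢ range q, #(Aprog H W q (n, kj) p) ≤ H / p + 1 := by
  rw [← card_biUnion ((pairwiseDisjoint_Aprog H W q n p).subset (Set.subset_univ _))]
  calc _ ≤ #(Ioc (n / p) ((n + H) / p)) := card_le_card fun l hl => ?_
    _ ≤ H / p + 1 := by
      rw [Nat.card_Ioc, Nat.sub_le_iff_le_add]
      exact (Nat.add_div_le_div_add_div_add_one n H p).trans_eq (by ring)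
  obtain ⟨kj, hkj, hl⟩ := mem_biUnion.1 hl
  obtain ⟨hlo, hhi⟩ := mem_Ioc.1 (mul_mem_Ioc_of_mem_Aprog (mem_product.1 hkj).1 hl)
  rw [mem_Ioc, Nat.div_lt_iff_lt_mul hp, Nat.le_div_iff_mul_le hp, mul_comm l]
  exact ⟨hlo, hhi⟩

theorem card_primesDya_le (s : ℕ) : #(primesDya s) ≤ 2 ^ (s - 1) := by
  refine (card_filter_le _ _).trans ?_
  rw [Nat.card_Ioc]
  cases s with
  | zero => simp
  | succ s => rw [pow_succ, Nat.add_sub_cancel]; omega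

theorem sum_primesDya_sum_card_Aprog_le {H W q n s : ℕ} (hH : 2 ^ (s - 1) ≤ H) :
    ∑ p ∈ primesDya s, ∑ kj ∈ Icc 1 (W ^ 2) ×ˢ range q, #(Aprog H W q (n, kj) p) ≤ 2 * H := by
  calc _ ≤ ∑ _p ∈ primesDya s, (H / 2 ^ (s - 1) + 1) := sum_le_sum fun p hp => ?_
    _ ≤ 2 ^ (s - 1) * (H / 2 ^ (s - 1) + 1) := by
      rw [sum_const, smul_eq_mul]
      exact Nat.mul_le_mul_right _ (card_primesDya_le s)
    _ ≤ 2 * H := by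
      rw [mul_add, mul_one]
      linarith [Nat.mul_div_le H (2 ^ (s - 1))]
  have hp : 2 ^ (s - 1) < p := (mem_Ioc.1 (mem_filter.1 hp).1).1
  exact (sum_card_Aprog_le ((Nat.zero_le _).trans_lt hp)).trans
    (Nat.add_le_add_right (Nat.div_le_div_left hp.le (by positivity)) 1)

theorem sum_cfgs_sum_card_Aprog_le {𝒩 : Finset ℕ} {H N W q s : ℕ} (h𝒩 : 𝒩 ⊆ Icc 1 N)
    (hH : 2 ^ (s - 1) ≤ H) :
    ∑ c ∈ cfgs 𝒩 W q, ∑ p ∈ primesDya s, #(Aprog H W q c p) ≤ 2 * N * H := by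
  rw [cfgs, sum_product]
  calc _ ≤ ∑ _n ∈ 𝒩, 2 * H := sum_le_sum fun n _ => by
        rw [sum_comm]; exact sum_primesDya_sum_card_Aprog_le hH
    _ ≤ N * (2 * H) := by
      rw [sum_const, smul_eq_mul]
      exact Nat.mul_le_mul_right _ ((card_le_card h𝒩).trans (by simp))
    _ = 2 * N * H := by ring

theorem norm_corrSum_le {H W q : ℕ} {u : (ℕ × ℕ × ℕ) → ℤ → ℂ} {c₁ c₂ : ℕ × ℕ × ℕ} {p₁ p₂ : ℕ}
    (h₁ : ∀ z, ‖u c₁ z‖ ≤ 2) (h₂ : ∀ z, ‖u c₂ z‖ ≤ 2) :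
    ‖corrSum H W q u c₁ c₂ p₁ p₂‖ ≤ 4 * #(Ainter H W q c₁ c₂ p₁ p₂) := by
  refine (norm_sum_le_of_le _ fun l _ => ?_).trans_eq (by rw [sum_const, nsmul_eq_mul, mul_comm])
  rw [norm_mul, RCLike.norm_conj]
  calc _ ≤ (2 : ℝ) * 2 := mul_le_mul (h₁ _) (h₂ _) (norm_nonneg _) zero_le_two
    _ = 4 := by norm_num

noncomputable def truncCorr (H W q s : ℕ) (B : ℝ) (u : (ℕ × ℕ × ℕ) → ℤ → ℂ)
    (w : ℕ → ℕ → ℂ) (c₁ c₂ : ℕ × ℕ × ℕ) (p₁ p₂ : ℕ) : ℂ :=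
  if (2 : ℝ) ^ (-(s : ℝ)) * (W : ℝ) ^ (-(B + 3)) * H ≤ #(Ainter H W q c₁ c₂ p₁ p₂)
  then w p₁ p₂ * corrSum H W q u c₁ c₂ p₁ p₂
  else 0

section truncCorr

variable {H W q s : ℕ} {B : ℝ} {𝒩 : Finset ℕ} {u : (ℕ × ℕ × ℕ) → ℤ → ℂ} {w : ℕ → ℕ → ℂ}
  {c₁ c₂ : ℕ × ℕ × ℕ} {p₁ p₂ : ℕ}

theorem norm_truncCorr_le (hw : ‖w p₁ p₂‖ ≤ 1) (h₁ : ∀ z, ‖u c₁ z‖ ≤ 2)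
    (h₂ : ∀ z, ‖u c₂ z‖ ≤ 2) :
    ‖truncCorr H W q s B u w c₁ c₂ p₁ p₂‖ ≤ 4 * #(Aprog H W q c₁ p₁) := by
  have hA : (#(Ainter H W q c₁ c₂ p₁ p₂) : ℝ) ≤ #(Aprog H W q c₁ p₁) := by
    exact_mod_cast card_le_card inter_subset_left
  unfold truncCorr
  split_ifs
  · rw [norm_mul]
    calc _ ≤ 1 * (4 * (#(Ainter H W q c₁ c₂ p₁ p₂) : ℝ)) :=
          mul_le_mul hw (norm_corrSum_le h₁ h₂) (norm_nonneg _) zero_le_one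
      _ ≤ _ := by linarith
  · rw [norm_zero]; positivity

theorem norm_truncCorr_le_of_notMem_OmegaSet (hw : ‖w p₁ p₂‖ ≤ 1)
    (hc₂ : (c₂, p₂) ∈ cfgs 𝒩 W q ×ˢ primesDya s)
    (hΩ : (c₂, p₂) ∉ OmegaSet H W q s B 𝒩 u c₁ p₁) :
    ‖truncCorr H W q s B u w c₁ c₂ p₁ p₂‖ ≤ (W : ℝ) ^ (-B) * #(Ainter H W q c₁ c₂ p₁ p₂) := by
  unfold truncCorr
  split_ifs with hlarge
  · have hsmall : ‖corrSum H W q u c₁ c₂ p₁ p₂‖ < (W : ℝ) ^ (-B) * #(Ainter H W q c₁ c₂ p₁ p₂) :=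
      lt_of_not_ge fun hbig => hΩ (mem_filter.2 ⟨hc₂, hlarge, hbig⟩)
    rw [norm_mul]
    nlinarith [norm_nonneg (w p₁ p₂), norm_nonneg (corrSum H W q u c₁ c₂ p₁ p₂)]
  · rw [norm_zero]; positivity

theorem sum_norm_truncCorr_le (hw : ∀ p₁ p₂, ‖w p₁ p₂‖ ≤ 1)
    (hu : ∀ c ∈ cfgs 𝒩 W q, ∀ z : ℤ, ‖u c z‖ ≤ 2) (hc₁ : c₁ ∈ cfgs 𝒩 W q)
    (hΩ : (#(OmegaSet H W q s B 𝒩 u c₁ p₁) : ℝ) < 2 ^ s * (W : ℝ) ^ (-B) * H) :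
    ∑ x ∈ cfgs 𝒩 W q ×ˢ primesDya s, ‖truncCorr H W q s B u w c₁ x.1 p₁ x.2‖
      ≤ 5 * (2 ^ s * (W : ℝ) ^ (-B) * H) * #(Aprog H W q c₁ p₁) := by
  have hP : (#(primesDya s) : ℝ) ≤ 2 ^ s := by
    exact_mod_cast (card_primesDya_le s).trans (Nat.pow_le_pow_right two_pos (Nat.sub_le s 1))
  have hsum : ∑ x ∈ cfgs 𝒩 W q ×ˢ primesDya s, (#(Ainter H W q c₁ x.1 p₁ x.2) : ℝ)
      ≤ 2 ^ s * (#(Aprog H W q c₁ p₁) * H) := by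
    rw [sum_product, sum_comm]
    calc _ ≤ ∑ _p₂ ∈ primesDya s, (#(Aprog H W q c₁ p₁) * H : ℝ) :=
          sum_le_sum fun p₂ _ => by exact_mod_cast sum_card_Ainter_le 𝒩 H W q c₁ p₁ p₂
      _ ≤ _ := by rw [sum_const, nsmul_eq_mul]; gcongr
  have hWB : (0 : ℝ) ≤ (W : ℝ) ^ (-B) := by positivity
  calc _ ≤ (W : ℝ) ^ (-B) * ∑ x ∈ cfgs 𝒩 W q ×ˢ primesDya s, (#(Ainter H W q c₁ x.1 p₁ x.2) : ℝ)
          + #(OmegaSet H W q s B 𝒩 u c₁ p₁) * (4 * #(Aprog H W q c₁ p₁)) :=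
        sum_le_of_le_off_exceptional (filter_subset _ _) hWB (fun _ _ => Nat.cast_nonneg _)
          (fun x hx => norm_truncCorr_le (hw _ _) (hu c₁ hc₁)
            (hu x.1 (mem_product.1 (mem_filter.1 hx).1).1))
          (fun x hx => norm_truncCorr_le_of_notMem_OmegaSet (hw _ _) (mem_sdiff.1 hx).1
            (mem_sdiff.1 hx).2)
    _ ≤ (W : ℝ) ^ (-B) * (2 ^ s * (#(Aprog H W q c₁ p₁) * H))
          + 2 ^ s * (W : ℝ) ^ (-B) * H * (4 * #(Aprog H W q c₁ p₁)) := by gcongr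
    _ = _ := by ring

end truncCorr

/-- If every exceptional set `Ω_{𝐧₁,p₁}` is small, then the contribution of the
quadruples with `#A_{𝐧₁,𝐧₂,p₁,p₂} ≥ 2^{-s} W^{-(B+3)} H` is at most
`C 2^s W^{-B} H² N`. -/
theorem stmt15 :
    ∃ C : ℝ, 0 < C ∧
      ∀ (H N W q s : ℕ) (B : ℝ), 0 < H → 0 < N → 10 ≤ W →
        (W : ℝ) / 2 < (q : ℝ) → q ≤ W → W ≤ 2 ^ s → 2 ^ s * W ^ 3 ≤ H → 10 ≤ B →
        ∀ 𝒩 : Finset ℕ, 𝒩 ⊆ Finset.Icc 1 N →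
        ∀ u : (ℕ × ℕ × ℕ) → ℤ → ℂ,
          (∀ c ∈ cfgs 𝒩 W q, ∀ z : ℤ, ‖u c z‖ ≤ 2) →
        ∀ w : ℕ → ℕ → ℂ, (∀ p₁ p₂, ‖w p₁ p₂‖ ≤ 1) →
        (∀ c₁ ∈ cfgs 𝒩 W q, ∀ p₁ ∈ primesDya s,
            ((OmegaSet H W q s B 𝒩 u c₁ p₁).card : ℝ)
              < 2 ^ s * (W : ℝ) ^ (-B) * H) →
          ‖∑ c₁ ∈ cfgs 𝒩 W q, ∑ c₂ ∈ cfgs 𝒩 W q,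
              ∑ p₁ ∈ primesDya s, ∑ p₂ ∈ primesDya s,
                (if (2 : ℝ) ^ (-(s : ℝ)) * (W : ℝ) ^ (-(B + 3)) * H
                    ≤ ((Ainter H W q c₁ c₂ p₁ p₂).card : ℝ)
                 then w p₁ p₂ * corrSum H W q u c₁ c₂ p₁ p₂
                 else 0)‖
            ≤ C * 2 ^ s * (W : ℝ) ^ (-B) * (H : ℝ) ^ 2 * (N : ℝ) := by
  refine ⟨10, by norm_num, ?_⟩
  intro H N W q s B _ _ hW _ _ _ hHs _ 𝒩 h𝒩 u hu w hw hΩ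
  have hH : 2 ^ (s - 1) ≤ H :=
    calc 2 ^ (s - 1) ≤ 2 ^ s * W ^ 3 :=
          (Nat.pow_le_pow_right two_pos (Nat.sub_le s 1)).trans
            (Nat.le_mul_of_pos_right _ (by positivity))
      _ ≤ H := hHs
  change ‖∑ c₁ ∈ cfgs 𝒩 W q, ∑ c₂ ∈ cfgs 𝒩 W q, ∑ p₁ ∈ primesDya s, ∑ p₂ ∈ primesDya s,
    truncCorr H W q s B u w c₁ c₂ p₁ p₂‖ ≤ _
  calc _ ≤ ∑ c₁ ∈ cfgs 𝒩 W q, ∑ p₁ ∈ primesDya s, ∑ x ∈ cfgs 𝒩 W q ×ˢ primesDya s,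
          ‖truncCorr H W q s B u w c₁ x.1 p₁ x.2‖ := norm_sum_sum_sum_sum_le _ _ _
    _ ≤ ∑ c₁ ∈ cfgs 𝒩 W q, ∑ p₁ ∈ primesDya s,
          5 * (2 ^ s * (W : ℝ) ^ (-B) * H) * #(Aprog H W q c₁ p₁) :=
        sum_le_sum fun c₁ hc₁ => sum_le_sum fun p₁ hp₁ =>
          sum_norm_truncCorr_le hw hu hc₁ (hΩ c₁ hc₁ p₁ hp₁)
    _ = 5 * (2 ^ s * (W : ℝ) ^ (-B) * H) *
          ((∑ c ∈ cfgs 𝒩 W q, ∑ p ∈ primesDya s, #(Aprog H W q c p) : ℕ) : ℝ) := by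
        push_cast; simp_rw [mul_sum]
    _ ≤ 5 * (2 ^ s * (W : ℝ) ^ (-B) * H) * ((2 * N * H : ℕ) : ℝ) := by
        gcongr; exact sum_cfgs_sum_card_Aprog_le h𝒩 hH
    _ = 10 * 2 ^ s * (W : ℝ) ^ (-B) * (H : ℝ) ^ 2 * (N : ℝ) := by push_cast; ring
end
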